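/- Suppose the exact solution $\hat{x}^n$ on a time block satisfies $\hat{x}^n = \tau^n(A \hat{x}^n + g(y^n)) + \hat{x}^{n-1}$ and the iterate satisfies $x^n = \tau^n(A x^n + g(\tilde{y}^n)) + x^{n-1}$ with the same initial condition $x^{N_{b-1}} = \hat{x}^{N_{b-1}}$, where $A \le 0$, $\tau^n > 0$, and $g$ is $L$-Lipschitz. Then the error satisfies $|\hat{x}^n - x^n| \le \sum_{m=N_{b-1}+1}^{n} \frac{\tau^m L}{\prod_{k=m}^{n}(1-\tau^k A)} |y^m - \tilde{y}^m| \le L \sum_{m=N_{b-1}+1}^{n} \tau^m |y^m - \tilde{y}^m|$. -/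

import Mathlib

/-!
Subtracting the two backward-Euler recursions, the error `eₙ = |x̂ⁿ - xⁿ|` satisfies
`(1 - τⁿ A) eₙ ≤ τⁿ L |yⁿ - ỹⁿ| + eₙ₋₁` with `e = 0` at the start of the block. Unrolling this
one-step inequality (a discrete Grönwall argument) divides each source term by the product of
the amplification factors `1 - τᵏ A` it passes through; since `A ≤ 0` these factors are at
least `1`, so dropping them gives the cruder bound.
-/

open Finset

lemma mul_abs_sub_le_of_backward_euler {τ A p q p₀ q₀ r s : ℝ} (hτ : 0 ≤ τ)
    (hc : 0 ≤ 1 - τ * A) (hp : p = τ * (A * p + r) + p₀) (hq : q = τ * (A * q + s) + q₀) :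
    (1 - τ * A) * |p - q| ≤ τ * |r - s| + |p₀ - q₀| :=
  calc (1 - τ * A) * |p - q| = |(1 - τ * A) * (p - q)| := by rw [abs_mul, abs_of_nonneg hc]
    _ = |τ * (r - s) + (p₀ - q₀)| := by congr 1; linear_combination hp - hq
    _ ≤ |τ * (r - s)| + |p₀ - q₀| := abs_add_le _ _
    _ = τ * |r - s| + |p₀ - q₀| := by rw [abs_mul, abs_of_nonneg hτ]

section DiscreteGronwall

variable {a : ℤ} {b c e : ℤ → ℝ}

lemma sum_div_prod_Icc_add_one {n : ℤ} (han : a ≤ n) :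
    ∑ m ∈ Ioc a (n + 1), b m / ∏ k ∈ Icc m (n + 1), c k
      = (b (n + 1) + ∑ m ∈ Ioc a n, b m / ∏ k ∈ Icc m n, c k) / c (n + 1) := by
  rw [← insert_Ioc_right_eq_Ioc_add_one han, sum_insert (by simp), Icc_self, prod_singleton,
    add_div, sum_div]
  congr 1
  refine sum_congr rfl fun m hm => ?_
  rw [← insert_Icc_right_eq_Icc_add_one (by linarith [(mem_Ioc.1 hm).2]), prod_insert (by simp),
    mul_comm, div_div]

lemma le_sum_div_prod_Icc_of_mul_le {N : ℤ} (hc : ∀ n ∈ Ioc a N, 0 < c n) (he : e a ≤ 0)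
    (hstep : ∀ n ∈ Ioc a N, c n * e n ≤ b n + e (n - 1)) {n : ℤ} (hn : n ∈ Icc a N) :
    e n ≤ ∑ m ∈ Ioc a n, b m / ∏ k ∈ Icc m n, c k := by
  obtain ⟨han, hnN⟩ := mem_Icc.1 hn
  induction n, han using Int.leInduction with
  | base => simpa using he
  | succ n han ih =>
    have hn₁ : n + 1 ∈ Ioc a N := mem_Ioc.2 ⟨by omega, hnN⟩
    have hstep₁ := hstep _ hn₁
    rw [add_sub_cancel_right] at hstep₁
    rw [sum_div_prod_Icc_add_one han, le_div_iff₀ (hc _ hn₁)]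
    linarith [ih (mem_Icc.2 ⟨han, by omega⟩) (by omega)]

end DiscreteGronwall

theorem block_iteration_error_bound
    (Nb1 Nb : ℤ) (τ : ℤ → ℝ) (A L : ℝ) (hA : A ≤ 0) (hL : 0 ≤ L)
    (hτ : ∀ n ∈ Finset.Ioc Nb1 Nb, 0 < τ n)
    (g : ℝ → ℝ) (hg : ∀ a b : ℝ, |g a - g b| ≤ L * |a - b|)
    (xhat x y yt : ℤ → ℝ)
    (hxhat : ∀ n ∈ Finset.Ioc Nb1 Nb, xhat n = τ n * (A * xhat n + g (y n)) + xhat (n - 1))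
    (hx : ∀ n ∈ Finset.Ioc Nb1 Nb, x n = τ n * (A * x n + g (yt n)) + x (n - 1))
    (hinit : x Nb1 = xhat Nb1) :
    ∀ n ∈ Finset.Ioc Nb1 Nb,
      |xhat n - x n| ≤
        ∑ m ∈ Finset.Ioc Nb1 n,
          (τ m * L / ∏ k ∈ Finset.Icc m n, (1 - τ k * A)) * |y m - yt m| ∧
      (∑ m ∈ Finset.Ioc Nb1 n,
          (τ m * L / ∏ k ∈ Finset.Icc m n, (1 - τ k * A)) * |y m - yt m|)
        ≤ L * ∑ m ∈ Finset.Ioc Nb1 n, τ m * |y m - yt m| := by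
  have hfac : ∀ k ∈ Ioc Nb1 Nb, 1 ≤ 1 - τ k * A := fun k hk =>
    (le_sub_self_iff 1).2 (mul_nonpos_of_nonneg_of_nonpos (hτ k hk).le hA)
  have hstep : ∀ k ∈ Ioc Nb1 Nb, (1 - τ k * A) * |xhat k - x k|
      ≤ τ k * L * |y k - yt k| + |xhat (k - 1) - x (k - 1)| := fun k hk => by
    refine (mul_abs_sub_le_of_backward_euler (hτ k hk).le (by linarith [hfac k hk])
      (hxhat k hk) (hx k hk)).trans ?_
    rw [mul_assoc]
    gcongr
    · exact (hτ k hk).le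
    · exact hg _ _
  intro n hn
  obtain ⟨hNb1n, hnNb⟩ := mem_Ioc.1 hn
  constructor
  · simpa only [div_mul_eq_mul_div] using
      le_sum_div_prod_Icc_of_mul_le (fun k hk => by linarith [hfac k hk]) (by simp [hinit])
        hstep (Ioc_subset_Icc_self hn)
  · rw [mul_sum]
    refine sum_le_sum fun m hm => ?_
    obtain ⟨hNb1m, hmn⟩ := mem_Ioc.1 hm
    have hprod : 1 ≤ ∏ k ∈ Icc m n, (1 - τ k * A) := one_le_prod fun k hk =>
      hfac k (mem_Ioc.2 ⟨by linarith [(mem_Icc.1 hk).1], by linarith [(mem_Icc.1 hk).2]⟩)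
    have hτm := (hτ m (mem_Ioc.2 ⟨hNb1m, hmn.trans hnNb⟩)).le
    calc (τ m * L / ∏ k ∈ Icc m n, (1 - τ k * A)) * |y m - yt m| ≤ τ m * L * |y m - yt m| := by
          gcongr
          exact div_le_self (by positivity) hprod
      _ = L * (τ m * |y m - yt m|) := by ring
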